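/- Neither the countably infinite complete graph K^{ℵ₀} nor the Farey graph is strongly immersed in the halved Farey graph. -/

import Mathlib

open SimpleGraph

/-- Two walks (with arbitrary endpoints) are edge-disjoint. -/
def EdgeDisjW {V : Type*} {G : SimpleGraph V} {a b c d : V}
    (p : G.Walk a b) (q : G.Walk c d) : Prop :=
  ∀ e, e ∈ p.edges → e ∉ q.edges

/-- A graph is infinitely edge-connected: it has at least two vertices and
between any two distinct vertices there are infinitely many pairwise
edge-disjoint paths. -/
def InfEdgeConn {V : Type*} (G : SimpleGraph V) : Prop :=
  (∃ u v : V, u ≠ v) ∧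
    ∀ u v : V, u ≠ v →
      ∃ P : ℕ → G.Walk u v,
        (∀ n, (P n).IsPath) ∧ ∀ m n, m ≠ n → EdgeDisjW (P m) (P n)

/-- Infinite edge-connectivity of the subgraph spanned by a vertex set `S`
(used for graphs of the form "union of a family of paths", whose abstract
vertex set is `S`). -/
def InfEdgeConnOn {V : Type*} (G : SimpleGraph V) (S : Set V) : Prop :=
  (∃ u ∈ S, ∃ v ∈ S, u ≠ v) ∧
    ∀ u ∈ S, ∀ v ∈ S, u ≠ v →
      ∃ P : ℕ → G.Walk u v,
        (∀ n, (P n).IsPath) ∧ ∀ m n, m ≠ n → EdgeDisjW (P m) (P n)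

/-- `α` together with the family of paths `P` (one for each edge of `H`)
is a strong immersion of `H` in `G`. -/
def IsStrongImmersion {VH VG : Type*} (H : SimpleGraph VH) (G : SimpleGraph VG)
    (α : VH → VG) (P : ∀ ⦃u v : VH⦄, H.Adj u v → G.Walk (α u) (α v)) : Prop :=
  Function.Injective α ∧
  (∀ ⦃u v : VH⦄ (h : H.Adj u v), (P h).IsPath) ∧
  (∀ ⦃u v u' v' : VH⦄ (h : H.Adj u v) (h' : H.Adj u' v'),
      s(u, v) ≠ s(u', v') → EdgeDisjW (P h) (P h')) ∧
  (∀ ⦃u v : VH⦄ (h : H.Adj u v), ∀ w ∈ (P h).support,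
      (∃ z, α z = w) → w = α u ∨ w = α v)

/-- `H` is strongly immersed in `G`. -/
def StronglyImmersed {VH VG : Type*} (H : SimpleGraph VH) (G : SimpleGraph VG) : Prop :=
  ∃ α P, IsStrongImmersion H G α P

/-- `β` together with the family of paths `P` witnesses that `G` contains
a subdivision of `H`: the paths are internally disjoint and have no internal
vertex among the branch vertices. -/
def IsSubdivision {VH VG : Type*} (H : SimpleGraph VH) (G : SimpleGraph VG)
    (β : VH → VG) (P : ∀ ⦃u v : VH⦄, H.Adj u v → G.Walk (β u) (β v)) : Prop :=
  Function.Injective β ∧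
  (∀ ⦃u v : VH⦄ (h : H.Adj u v), (P h).IsPath) ∧
  (∀ ⦃u v u' v' : VH⦄ (h : H.Adj u v) (h' : H.Adj u' v'),
      s(u, v) ≠ s(u', v') → ∀ w, w ∈ (P h).support → w ∈ (P h').support →
        (w = β u ∨ w = β v) ∧ (w = β u' ∨ w = β v')) ∧
  (∀ ⦃u v : VH⦄ (h : H.Adj u v), ∀ w ∈ (P h).support,
      (∃ z, β z = w) → w = β u ∨ w = β v)

/-- `H` is a topological minor of `G`. -/
def TopMinor {VH VG : Type*} (H : SimpleGraph VH) (G : SimpleGraph VG) : Prop :=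
  ∃ β P, IsSubdivision H G β P

/-- The dyadic rationals of the unit interval: the vertices of the halved
Farey graph. -/
def DyadicSet : Set ℚ := {q | ∃ n k : ℕ, k ≤ 2 ^ n ∧ q = (k : ℚ) / 2 ^ n}

/-- The halved Farey graph: two dyadic rationals of `[0,1]` are adjacent iff
they are of the form `k/2^n` and `(k+1)/2^n`. -/
def halvedFarey : SimpleGraph DyadicSet where
  Adj a b := a ≠ b ∧ ∃ n k : ℕ, k + 1 ≤ 2 ^ n ∧
    ((a.1 = (k : ℚ) / 2 ^ n ∧ b.1 = ((k : ℚ) + 1) / 2 ^ n) ∨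
     (b.1 = (k : ℚ) / 2 ^ n ∧ a.1 = ((k : ℚ) + 1) / 2 ^ n))
  symm := by
    refine ⟨?_⟩
    rintro a b ⟨hne, n, k, hk, h⟩
    exact ⟨hne.symm, n, k, hk, h.symm⟩
  loopless := by refine ⟨?_⟩; rintro a ⟨hne, -⟩; exact hne rfl

/-- Adjacency in the Farey graph on `ℚ ∪ {∞}` (`none` is `∞ = ±1/0`). -/
def fareyAdj : Option ℚ → Option ℚ → Prop
  | some q, some r =>
      q.num * (r.den : ℤ) - r.num * (q.den : ℤ) = 1 ∨
      q.num * (r.den : ℤ) - r.num * (q.den : ℤ) = -1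
  | some q, none => q.den = 1
  | none, some r => r.den = 1
  | none, none => False

/-- The Farey graph. -/
def fareyGraph : SimpleGraph (Option ℚ) where
  Adj := fareyAdj
  symm := by
    refine ⟨?_⟩
    rintro (_ | q) (_ | r) h <;> simp only [fareyAdj] at * <;> omega
  loopless := by
    refine ⟨?_⟩
    rintro (_ | q) h <;> simp only [fareyAdj] at h <;> omega
/-- `u` occurs strictly before `v` on the list `l`. -/
def Before {V : Type*} (l : List V) (u v : V) : Prop := List.Sublist [u, v] l

/-- `l` is the (consecutive) portion of the list `R` starting at `u` and
ending at `v`. -/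
def IsPortion {V : Type*} (R : List V) (u v : V) (l : List V) : Prop :=
  (∃ pre post, R = pre ++ l ++ post) ∧ l.head? = some u ∧ l.getLast? = some v

/-- The union of a family of walks, as a graph on the ambient vertex set
(its abstract vertex set is `walkSupp P`). -/
def walkUnion {V : Type*} {G : SimpleGraph V} {x y : V}
    (P : ℕ → G.Walk x y) : SimpleGraph V where
  Adj u v := ∃ n, s(u, v) ∈ (P n).edges
  symm := by
    refine ⟨?_⟩
    rintro u v ⟨n, h⟩
    exact ⟨n, by rwa [Sym2.eq_swap]⟩
  loopless := by
    refine ⟨?_⟩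
    rintro v ⟨n, h⟩
    exact G.loopless.irrefl v ((P n).edges_subset_edgeSet h)

/-- The vertices appearing on some walk of the family. -/
def walkSupp {V : Type*} {G : SimpleGraph V} {x y : V}
    (P : ℕ → G.Walk x y) : Set V := {v | ∃ n, v ∈ (P n).support}

/-- An `x`–`y` grain line in `G`. -/
structure GrainLine {V : Type*} (G : SimpleGraph V) (x y : V) where
  ne_xy : x ≠ y
  /-- The limit set `L`. -/
  L : Set V
  /-- The linear order `≤_L` on `L`. -/
  le : V → V → Prop
  /-- The pairwise edge-disjoint `x`–`y` paths. -/
  P : ℕ → G.Walk x y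
  isPath : ∀ n, (P n).IsPath
  edgeDisj : ∀ m n, m ≠ n → EdgeDisjW (P m) (P n)
  le_refl : ∀ v ∈ L, le v v
  le_trans : ∀ u ∈ L, ∀ v ∈ L, ∀ w ∈ L, le u v → le v w → le u w
  le_antisymm : ∀ u ∈ L, ∀ v ∈ L, le u v → le v u → u = v
  le_total : ∀ u ∈ L, ∀ v ∈ L, le u v ∨ le v u
  x_mem : x ∈ L
  y_mem : y ∈ L
  x_min : ∀ v ∈ L, le x v
  y_max : ∀ v ∈ L, le v y
  /-- (GL1): `L` is the set of vertices lying on a final segment of the paths. -/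
  gl1 : ∀ v : V, v ∈ L ↔ ∃ N : ℕ, ∀ n : ℕ, v ∈ (P n).support ↔ N ≤ n
  /-- (GL2): a vertex of some path not in `L` lies on no other path. -/
  gl2 : ∀ n : ℕ, ∀ v ∈ (P n).support, v ∉ L → ∀ m : ℕ, m ≠ n → v ∉ (P m).support
  /-- (GL3): for `n ≥ 1`, the path `P n` traverses the vertices of `L_{<n}`
  in the order given by `≤_L`. -/
  gl3 : ∀ n : ℕ, 1 ≤ n → ∀ u v : V, u ∈ L → v ∈ L →
      (∃ m < n, u ∈ (P m).support) → (∃ m < n, v ∈ (P m).support) →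
      u ≠ v → (le u v ↔ Before (P n).support u v)

namespace GrainLine

variable {V : Type*} {G : SimpleGraph V} {x y : V}

/-- The graph `⋃𝒫` defined by the grain line. -/
def union (gl : GrainLine G x y) : SimpleGraph V := walkUnion gl.P

/-- The vertex set of `⋃𝒫`. -/
def supp (gl : GrainLine G x y) : Set V := walkSupp gl.P

/-- The set `L_{<n}` of vertices of `L` of depth `< n`. -/
def Llt (gl : GrainLine G x y) (n : ℕ) : Set V :=
  {v | v ∈ gl.L ∧ ∃ m < n, v ∈ (gl.P m).support}

/-- The `𝒫`-depth of a vertex. -/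
noncomputable def vDepth (gl : GrainLine G x y) (v : V) : ℕ :=
  sInf {n | v ∈ (gl.P n).support}

/-- The `𝒫`-depth of an edge. -/
noncomputable def eDepth (gl : GrainLine G x y) (e : Sym2 V) : ℕ :=
  sInf {n | e ∈ (gl.P n).edges}

/-- `u` and `v` are the ends of a `𝒫`-segment of depth `d`: both lie in
`L_{<d}` and `v` is the successor of `u` in `(L_{<d}, ≤_L)`. -/
def IsSegEnds (gl : GrainLine G x y) (d : ℕ) (u v : V) : Prop :=
  u ∈ gl.Llt d ∧ v ∈ gl.Llt d ∧ u ≠ v ∧ gl.le u v ∧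
    ∀ z ∈ gl.Llt d, gl.le u z → gl.le z v → z = u ∨ z = v

/-- The grain line is well-structured: every vertex of a `𝒫`-segment
`u P_d v` lying in `L` belongs to the interval `[u,v]` of `(L, ≤_L)`. -/
def WellStructured (gl : GrainLine G x y) : Prop :=
  ∀ d u v, gl.IsSegEnds d u v →
    ∀ w ∈ gl.L, (w = u ∨ w = v ∨ List.Sublist [u, w, v] (gl.P d).support) →
      gl.le u w ∧ gl.le w v

/-- The grain line is free: the graph `⋃𝒫` it defines is infinitely
edge-connected. -/
def Free (gl : GrainLine G x y) : Prop := InfEdgeConnOn gl.union gl.supp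

/-- The grain line is wildly presented. -/
def WildlyPresented (gl : GrainLine G x y) : Prop :=
  ∀ n : ℕ, 1 ≤ n → ∀ u v : V, u ∈ gl.Llt n → v ∈ gl.Llt n → u ≠ v → gl.le u v →
    ∃ w ∈ gl.L, w ≠ u ∧ w ≠ v ∧ gl.le u w ∧ gl.le w v ∧
      List.Sublist [u, w, v] (gl.P n).support

end GrainLine

/-- `G` is a generalised halved Farey graph: it is defined by a grain line
satisfying (GL2') and (GL3'). -/
def IsGenHalvedFarey {V : Type*} (G : SimpleGraph V) : Prop :=
  ∃ (x y : V) (gl : GrainLine G x y),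
    (∀ v : V, v ∈ gl.L) ∧
    (∀ u v : V, gl.le u v ↔ (u = v ∨ ∃ n, Before (gl.P n).support u v)) ∧
    (∀ u v : V, G.Adj u v ↔ ∃ n, s(u, v) ∈ (gl.P n).edges)
/-- `{A, B}` is a compound-separation of `G`. -/
def IsCompoundSep {V : Type*} (G : SimpleGraph V) (A B : Set V) : Prop :=
  A ∪ B = Set.univ ∧ (A \ B).Nonempty ∧ (B \ A).Nonempty ∧ (A ∩ B).Finite ∧
    {p : V × V | G.Adj p.1 p.2 ∧ p.1 ∈ A \ B ∧ p.2 ∈ B \ A}.Finite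

/-- The separation `{A, B}` separates the vertices `u` and `v`. -/
def SepPair {V : Type*} (A B : Set V) (u v : V) : Prop :=
  (u ∈ A \ B ∧ v ∈ B \ A) ∨ (u ∈ B \ A ∧ v ∈ A \ B)

/-- The compound-separation `{A, B}` separates `u` and `v` minimally. -/
def MinSeps {V : Type*} (G : SimpleGraph V) (A B : Set V) (u v : V) : Prop :=
  SepPair A B u v ∧
    ∀ C D : Set V, IsCompoundSep G C D → C ∩ D ⊂ A ∩ B → ¬ SepPair C D u v

/-- `{A, B}` is a unitary compound-separation of `G` with separator `w`. -/
def IsUnitaryCSep {V : Type*} (G : SimpleGraph V) (A B : Set V) (w : V) : Prop :=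
  IsCompoundSep G A B ∧ A ∩ B = {w}

/-- `w` is a compound-cutvertex of `G`. -/
def IsCompoundCutvertex {V : Type*} (G : SimpleGraph V) (w : V) : Prop :=
  ∃ A B, IsUnitaryCSep G A B w

/-- `G` is `k`-compound-connected: no compound-separation of order `< k`
separates any two vertices. -/
def kCompConn {V : Type*} (G : SimpleGraph V) (k : ℕ) : Prop :=
  ∀ A B : Set V, IsCompoundSep G A B → (A ∩ B).ncard < k →
    ∀ u v : V, ¬ SepPair A B u v

/-- `u` and `v` cannot be separated by deleting finitely many edges. -/
def FinEdgeConn {V : Type*} (G : SimpleGraph V) (u v : V) : Prop :=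
  ∀ F : Set (Sym2 V), F.Finite → (G.deleteEdges F).Reachable u v

/-- `G` is a Π-graph: it is infinitely edge-connected but has no two vertices
linked by infinitely many pairwise internally disjoint paths. -/
def PiGraph {V : Type*} (G : SimpleGraph V) : Prop :=
  InfEdgeConn G ∧
    ∀ u v : V, u ≠ v →
      ¬ ∃ P : ℕ → G.Walk u v, (∀ n, (P n).IsPath) ∧
          ∀ m n, m ≠ n → ∀ w ∈ (P m).support, w ∈ (P n).support → w = u ∨ w = v

/-- `H` is a `k`-bounded minor of `G`: there are disjoint nonempty connected
branch sets of size `< k`. -/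
def IsBddMinor {VH VG : Type*} (H : SimpleGraph VH) (G : SimpleGraph VG) (k : ℕ) : Prop :=
  ∃ B : VH → Set VG,
    (∀ h, (B h).Nonempty) ∧
    (∀ h, (B h).Finite ∧ (B h).ncard < k) ∧
    (∀ h h', h ≠ h' → Disjoint (B h) (B h')) ∧
    (∀ h, (G.induce (B h)).Connected) ∧
    (∀ h h', H.Adj h h' → ∃ a ∈ B h, ∃ b ∈ B h', G.Adj a b)

/-- The order on oriented separations: `(A,B) ≤ (C,D)` iff `A ⊆ C` and `D ⊆ B`. -/
def osLE {V : Type*} (s t : Set V × Set V) : Prop := s.1 ⊆ t.1 ∧ t.2 ⊆ s.2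

/-- The reverse orientation of an oriented separation. -/
def swapSep {V : Type*} (s : Set V × Set V) : Set V × Set V := (s.2, s.1)

/-- Two (unordered) separations, given by representative orientations, are
nested: they have comparable orientations. -/
def NestedSep {V : Type*} (s t : Set V × Set V) : Prop :=
  osLE s t ∨ osLE t s ∨ osLE s (swapSep t) ∨ osLE (swapSep s) t

/-- `σ` is an orientation of the set `N` of separations which is a star. -/
def IsStarOrientation {V : Type*} (N σ : Set (Set V × Set V)) : Prop :=
  (∀ s ∈ N, s ∈ σ ∨ swapSep s ∈ σ) ∧
  (∀ s ∈ N, ¬ (s ∈ σ ∧ swapSep s ∈ σ)) ∧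
  (∀ t ∈ σ, t ∈ N ∨ swapSep t ∈ N) ∧
  (∀ s ∈ σ, ∀ t ∈ σ, s ≠ t → osLE s (swapSep t))

/-- The set `N` of unitary compound-separations is faithful to the
compound-cutvertex `w` in `G`. -/
def FaithfulToVert {V : Type*} (G : SimpleGraph V) (N : Set (Set V × Set V)) (w : V) : Prop :=
  (∃ σ, IsStarOrientation {s ∈ N | s.1 ∩ s.2 = {w}} σ) ∧
  ∀ u v : V, (∃ A B, IsUnitaryCSep G A B w ∧ SepPair A B u v) →
    ∃ s ∈ N, s.1 ∩ s.2 = {w} ∧ SepPair s.1 s.2 u v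

/-- The set `N` of unitary compound-separations is faithful to `G`. -/
def FaithfulSet {V : Type*} (G : SimpleGraph V) (N : Set (Set V × Set V)) : Prop :=
  ∀ w : V, IsCompoundCutvertex G w → FaithfulToVert G N w

/-- A set of graphs is typical for the class of infinitely edge-connected
graphs with regard to the topological minor relation. -/
def TypicalTopMinor (𝓗 : Set (Σ V : Type, SimpleGraph V)) : Prop :=
  ∀ (W : Type) (G : SimpleGraph W), InfEdgeConn G → ∃ H ∈ 𝓗, TopMinor H.2 G

/-!
Order the vertices of the halved Farey graph by their value in `[0, 1]`. An edge
`k/2^n – (k+1)/2^n` strictly straddles a vertex `K/2^N` only if `n < N`, so every vertex is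
straddled by finitely many edges. A strong immersion inherits this: the branch path of an
edge whose ends lie on either side of a branch vertex `z` avoids `z`, so it uses an edge of
the host graph straddling `z`, and distinct branch paths are edge-disjoint. Hence a graph
strongly immersed in the halved Farey graph admits an injective map to `ℚ` under which every
vertex is straddled by finitely many edges. Neither `K^ℵ₀` nor the Farey graph does: in
`K^ℵ₀` take branch vertices `l < m < r` and the paths `l y r`; in the Farey graph, the
Stern–Brocot walks of all depths from an integer `n` to `∞` are edge-disjoint and avoid every
integer below `n`, and a reflection handles the integers above `n`.
-/

open Function

section Straddling

variable {V β : Type*} [LinearOrder β] {G : SimpleGraph V}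

def straddlingEdges (G : SimpleGraph V) (f : V → β) (t : β) : Set (Sym2 V) :=
  {e | e ∈ G.edgeSet ∧ ∃ a b, e = s(a, b) ∧ f a < t ∧ t < f b}

def LocallyFiniteStraddling (G : SimpleGraph V) (f : V → β) : Prop :=
  ∀ w, (straddlingEdges G f (f w)).Finite

lemma SimpleGraph.Walk.exists_mem_edges_straddling {f : V → β} (hf : Injective f) {z : V} :
    ∀ {a b : V} (W : G.Walk a b), z ∉ W.support → f a < f z → f z < f b →
      ∃ e ∈ W.edges, e ∈ straddlingEdges G f (f z)
  | _, _, .nil, _, ha, hb => absurd (ha.trans hb) (lt_irrefl _)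
  | a, _, .cons (v := c) hac W, hz, ha, hb => by
    rw [Walk.support_cons, List.mem_cons, not_or] at hz
    have hcz : c ≠ z := fun h => hz.2 (h ▸ W.start_mem_support)
    rcases lt_or_gt_of_ne (hf.ne hcz) with hc | hc
    · obtain ⟨e, he, hst⟩ := W.exists_mem_edges_straddling hf hz.2 hc hb
      exact ⟨e, by simp [he], hst⟩
    · exact ⟨s(a, c), by simp, hac, a, c, rfl, ha, hc⟩

lemma not_locallyFiniteStraddling_of_walks {f : V → β} (hf : Injective f) {ι : Type*}
    [Infinite ι] {a b z : V} (W : ι → G.Walk a b)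
    (hW : Pairwise fun i j => EdgeDisjW (W i) (W j)) (hz : ∀ i, z ∉ (W i).support)
    (ha : f a < f z) (hb : f z < f b) : ¬ LocallyFiniteStraddling G f := by
  intro hG
  choose e he hst using fun i => (W i).exists_mem_edges_straddling hf (hz i) ha hb
  refine Set.infinite_of_injective_forall_mem (f := e) (fun i j hij => ?_) hst (hG z)
  by_contra hne
  exact hW hne _ (he i) (hij ▸ he j)

lemma IsStrongImmersion.locallyFiniteStraddling {W : Type*} {H : SimpleGraph W} {α : W → V}
    {P : ∀ ⦃u v : W⦄, H.Adj u v → G.Walk (α u) (α v)} (himm : IsStrongImmersion H G α P)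
    {f : V → β} (hf : Injective f) (hG : LocallyFiniteStraddling G f) :
    LocallyFiniteStraddling H (f ∘ α) := by
  intro z
  have key : ∀ e : straddlingEdges H (f ∘ α) (f (α z)), ∃ u v, ∃ huv : H.Adj u v,
      e.1 = s(u, v) ∧ ∃ e' ∈ (P huv).edges, e' ∈ straddlingEdges G f (f (α z)) := by
    rintro ⟨_, huv, u, v, rfl, hu, hv⟩
    refine ⟨u, v, huv, rfl, (P huv).exists_mem_edges_straddling hf (fun hz => ?_) hu hv⟩
    rcases himm.2.2.2 huv _ hz ⟨z, rfl⟩ with h | h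
    · exact hu.ne (congrArg f h).symm
    · exact hv.ne' (congrArg f h).symm
  choose u v huv he e' he' hst using key
  have := (hG (α z)).to_subtype
  refine Set.finite_coe_iff.1 (Finite.of_injective (fun e => (⟨e' e, hst e⟩ :
    straddlingEdges G f (f (α z)))) fun e₁ e₂ h => ?_)
  by_contra hne
  have h : e' e₁ = e' e₂ := congrArg Subtype.val h
  refine himm.2.2.1 (huv e₁) (huv e₂) ?_ _ (he' e₁) (h ▸ he' e₂)
  rwa [← he, ← he, Ne, ← Subtype.ext_iff]

lemma StronglyImmersed.exists_injective_locallyFiniteStraddling {W : Type*}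
    {H : SimpleGraph W} (h : StronglyImmersed H G) {f : V → β} (hf : Injective f)
    (hG : LocallyFiniteStraddling G f) :
    ∃ g : W → β, Injective g ∧ LocallyFiniteStraddling H g :=
  let ⟨_, _, himm⟩ := h
  ⟨_, hf.comp himm.1, himm.locallyFiniteStraddling hf hG⟩

end Straddling

lemma lt_of_div_two_pow_lt_lt {k K n N : ℕ} (hlo : (k : ℚ) / 2 ^ n < K / 2 ^ N)
    (hhi : (K : ℚ) / 2 ^ N < (k + 1) / 2 ^ n) : n < N := by
  by_contra! hNn
  have hpow : (2 : ℚ) ^ n = 2 ^ N * 2 ^ (n - N) := by rw [← pow_add, Nat.add_sub_cancel' hNn]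
  rw [div_lt_div_iff₀ (by positivity) (by positivity), hpow] at hlo hhi
  have h₁ : (k : ℚ) < K * 2 ^ (n - N) :=
    lt_of_mul_lt_mul_right (by linarith) (by positivity : (0 : ℚ) ≤ 2 ^ N)
  have h₂ : (K : ℚ) * 2 ^ (n - N) < k + 1 :=
    lt_of_mul_lt_mul_right (by linarith) (by positivity : (0 : ℚ) ≤ 2 ^ N)
  norm_cast at h₁ h₂
  omega

lemma div_two_pow_eq_div_two_pow_of_le {n N : ℕ} (h : n ≤ N) (k : ℚ) :
    k / 2 ^ n = k * 2 ^ (N - n) / 2 ^ N := by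
  rw [← Nat.add_sub_cancel' h, pow_add, Nat.add_sub_cancel_left,
    mul_div_mul_right _ _ (by positivity)]

lemma halvedFarey_locallyFiniteStraddling :
    LocallyFiniteStraddling halvedFarey (Subtype.val : DyadicSet → ℚ) := by
  rintro ⟨_, N, K, -, rfl⟩
  let S : Set DyadicSet := {v | ∃ j : ℕ, j ≤ 2 ^ N ∧ (v : ℚ) = j / 2 ^ N}
  have hS : S.Finite := by
    refine (((Set.finite_Iic (2 ^ N)).image fun j : ℕ => (j : ℚ) / 2 ^ N).preimage
      Subtype.val_injective.injOn).subset ?_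
    rintro v ⟨j, hj, hv⟩
    exact ⟨j, hj, hv.symm⟩
  refine (hS.prod hS).image (fun p => s(p.1, p.2)) |>.subset ?_
  rintro _ ⟨hadj, a, b, rfl, ha, hb⟩
  obtain ⟨-, n, k, hk, hab⟩ := (SimpleGraph.mem_edgeSet _).1 hadj
  change (a : ℚ) < K / 2 ^ N at ha
  change (K : ℚ) / 2 ^ N < b at hb
  obtain ⟨hak, hbk⟩ : (a : ℚ) = k / 2 ^ n ∧ (b : ℚ) = (k + 1) / 2 ^ n := by
    refine hab.resolve_right fun h => ?_
    have : (b : ℚ) < a := by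
      rw [h.1, h.2]; exact div_lt_div_of_pos_right (by linarith) (by positivity)
    linarith
  have hnN := lt_of_div_two_pow_lt_lt (hak ▸ ha) (hbk ▸ hb)
  have hkN : (k + 1) * 2 ^ (N - n) ≤ 2 ^ N := by
    calc (k + 1) * 2 ^ (N - n) ≤ 2 ^ n * 2 ^ (N - n) := Nat.mul_le_mul_right _ hk
      _ = 2 ^ N := by rw [← pow_add, Nat.add_sub_cancel' hnN.le]
  refine ⟨(a, b), ⟨⟨k * 2 ^ (N - n), (Nat.mul_le_mul_right _ k.le_succ).trans hkN, ?_⟩,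
    ⟨(k + 1) * 2 ^ (N - n), hkN, ?_⟩⟩, rfl⟩
  · rw [hak, div_two_pow_eq_div_two_pow_of_le hnN.le]; push_cast; ring
  · rw [hbk, div_two_pow_eq_div_two_pow_of_le hnN.le]; push_cast; ring

lemma Finset.exists_lt_lt_of_two_lt_card {ι β : Type*} [LinearOrder β] {s : Finset ι}
    {f : ι → β} (hf : Set.InjOn f s) (hs : 2 < s.card) :
    ∃ l ∈ s, ∃ m ∈ s, ∃ r ∈ s, f l < f m ∧ f m < f r := by
  classical
  set t := s.image f
  have ht : 2 < t.card := by rwa [Finset.card_image_of_injOn hf]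
  have hne : t.Nonempty := Finset.card_pos.1 (by omega)
  obtain ⟨y, hy⟩ : ((t.erase (t.min' hne)).erase (t.max' hne)).Nonempty := by
    rw [← Finset.card_pos]
    have h₁ := Finset.pred_card_le_card_erase (s := t) (a := t.min' hne)
    have h₂ := Finset.pred_card_le_card_erase (s := t.erase (t.min' hne)) (a := t.max' hne)
    omega
  simp only [Finset.mem_erase] at hy
  obtain ⟨hymax, hymin, hy⟩ := hy
  obtain ⟨l, hl, hfl⟩ := Finset.mem_image.1 (t.min'_mem hne)
  obtain ⟨m, hm, rfl⟩ := Finset.mem_image.1 hy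
  obtain ⟨r, hr, hfr⟩ := Finset.mem_image.1 (t.max'_mem hne)
  refine ⟨l, hl, m, hm, r, hr, ?_, ?_⟩
  · rw [hfl]; exact lt_of_le_of_ne (t.min'_le _ hy) (Ne.symm hymin)
  · rw [hfr]; exact lt_of_le_of_ne (t.le_max' _ hy) hymax

lemma not_locallyFiniteStraddling_top {V β : Type*} [LinearOrder β] [Infinite V] {g : V → β}
    (hg : Injective g) : ¬ LocallyFiniteStraddling (⊤ : SimpleGraph V) g := by
  obtain ⟨s, hs⟩ := Infinite.exists_subset_card_eq V 3
  obtain ⟨l, hl, m, hm, r, hr, hlm, hmr⟩ := s.exists_lt_lt_of_two_lt_card hg.injOn (by omega)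
  have : Infinite ((s : Set V)ᶜ : Set V) := s.finite_toSet.infinite_compl.to_subtype
  have hout : ∀ y : ((s : Set V)ᶜ : Set V), y.1 ≠ l ∧ y.1 ≠ m ∧ y.1 ≠ r := fun y =>
    ⟨ne_of_mem_of_not_mem hl y.2 ∘ Eq.symm, ne_of_mem_of_not_mem hm y.2 ∘ Eq.symm,
      ne_of_mem_of_not_mem hr y.2 ∘ Eq.symm⟩
  let W (y : ((s : Set V)ᶜ : Set V)) : (⊤ : SimpleGraph V).Walk l r :=
    .cons (by simpa using (hout y).1.symm) (.cons (by simpa using (hout y).2.2) .nil)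
  refine not_locallyFiniteStraddling_of_walks hg W (fun y y' hyy' e he he' => ?_)
    (fun y hy => ?_) hlm hmr
  · have hyy' : y.1 ≠ y'.1 := Subtype.coe_ne_coe.2 hyy'
    have := hout y; have := hout y'
    simp only [W, Walk.edges_cons, Walk.edges_nil, List.mem_cons, List.not_mem_nil,
      or_false] at he he'
    rcases he with rfl | rfl <;> rcases he' with h | h <;> simp_all
  · simp only [W, Walk.support_cons, Walk.support_nil, List.mem_cons, List.not_mem_nil,
      or_false] at hy
    rcases hy with h | h | h
    · exact hlm.ne (congrArg g h).symm
    · exact (hout y).2.1 h.symm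
    · exact hmr.ne (congrArg g h)

section EdgeDisjoint

variable {V V' : Type*} {G : SimpleGraph V} {a b c d : V}

lemma EdgeDisjW.symm {p : G.Walk a b} {q : G.Walk c d} (h : EdgeDisjW p q) : EdgeDisjW q p :=
  fun e hq hp => h e hp hq

lemma EdgeDisjW.reverse {p : G.Walk a b} {q : G.Walk c d} (h : EdgeDisjW p q) :
    EdgeDisjW p.reverse q.reverse := by
  simpa [EdgeDisjW] using h

lemma EdgeDisjW.map {G' : SimpleGraph V'} {f : G →g G'} (hf : Injective f) {p : G.Walk a b}
    {q : G.Walk c d} (h : EdgeDisjW p q) : EdgeDisjW (p.map f) (q.map f) := by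
  simp only [EdgeDisjW, Walk.edges_map, List.mem_map]
  rintro _ ⟨e, he, rfl⟩ ⟨e', he', hee'⟩
  exact h e he (Sym2.map.injective hf hee' ▸ he')

end EdgeDisjoint

lemma SimpleGraph.notMem_edgeSet_of_forall_eq {V β : Type*} {G : SimpleGraph V} {f : V → β}
    (hf : Injective f) {e : Sym2 V} {t : β} (h : ∀ v ∈ e, f v = t) : e ∉ G.edgeSet := by
  induction e with
  | _ x y =>
    rw [mem_edgeSet]
    exact fun hxy => hxy.ne (hf ((h x (Sym2.mem_mk_left x y)).trans
      (h y (Sym2.mem_mk_right x y)).symm))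

/-- The Farey vertex `p / q`, where `q = 0` gives `∞`. -/
def fareyVertex (p q : ℤ) : Option ℚ := if q = 0 then none else some ((p : ℚ) / q)

/-- Orders `ℚ ∪ {∞}` with `∞` on top. -/
def fareyPos : Option ℚ → WithTop ℚ
  | none => ⊤
  | some q => q

lemma fareyPos_injective : Injective fareyPos := by
  rintro (_ | p) (_ | q) h <;> simp_all [fareyPos]

lemma fareyVertex_of_ne_zero {p q : ℤ} (hq : q ≠ 0) : fareyVertex p q = some ((p : ℚ) / q) :=
  if_neg hq

lemma fareyVertex_one_injective : Injective fun n : ℤ => fareyVertex n 1 := by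
  intro m n h
  simpa [fareyVertex] using h

lemma fareyPos_fareyVertex_one (n : ℤ) :
    fareyPos (fareyVertex n 1) = ((n : ℚ) : WithTop ℚ) := by
  simp [fareyVertex, fareyPos]

section SternBrocot

variable {a b c d : ℤ}

lemma fareyGraph_adj_fareyVertex (hb : 0 < b) (hd : 0 ≤ d) (h : b * c - a * d = 1) :
    fareyGraph.Adj (fareyVertex a b) (fareyVertex c d) := by
  have hcop₁ : Nat.Coprime a.natAbs b.natAbs :=
    Int.isCoprime_iff_gcd_eq_one.1 ⟨-d, c, by linear_combination h⟩
  rcases hd.eq_or_lt with rfl | hd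
  · obtain rfl : b = 1 := Int.eq_one_of_mul_eq_one_right hb.le (by simpa using h)
    simp [fareyGraph, fareyVertex, fareyAdj]
  have hcop₂ : Nat.Coprime c.natAbs d.natAbs :=
    Int.isCoprime_iff_gcd_eq_one.1 ⟨b, -a, by linear_combination h⟩
  simp only [fareyGraph, fareyVertex, hb.ne', hd.ne', if_false, fareyAdj]
  rw [Rat.num_div_eq_of_coprime hb hcop₁, Rat.den_div_eq_of_coprime hb hcop₁,
    Rat.num_div_eq_of_coprime hd hcop₂, Rat.den_div_eq_of_coprime hd hcop₂]
  right
  linear_combination -h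

lemma fareyPos_mediant (hb : 0 < b) (hd : 0 ≤ d) (h : b * c - a * d = 1) :
    fareyPos (fareyVertex a b) < fareyPos (fareyVertex (a + c) (b + d)) ∧
      fareyPos (fareyVertex (a + c) (b + d)) < fareyPos (fareyVertex c d) := by
  have hbd : (0 : ℚ) < b + d := by exact_mod_cast (by omega : 0 < b + d)
  have hb' : (0 : ℚ) < b := by exact_mod_cast hb
  rw [fareyVertex_of_ne_zero hb.ne', fareyVertex_of_ne_zero (by omega : b + d ≠ 0)]
  refine ⟨WithTop.coe_lt_coe.2 ?_, ?_⟩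
  · rw [div_lt_div_iff₀ hb' (by push_cast; exact hbd)]
    push_cast
    linarith [(by exact_mod_cast h : (b : ℚ) * c - a * d = 1)]
  · rcases hd.eq_or_lt with rfl | hd
    · exact WithTop.coe_lt_top _
    · have hd' : (0 : ℚ) < d := by exact_mod_cast hd
      rw [fareyVertex_of_ne_zero hd.ne']
      refine WithTop.coe_lt_coe.2 ?_
      rw [div_lt_div_iff₀ (by push_cast; exact hbd) hd']
      push_cast
      linarith [(by exact_mod_cast h : (b : ℚ) * c - a * d = 1)]

/-- Passes through all fractions of depth at most `n` in the Stern–Brocot subtree below the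
Farey edge `a / b – c / d`. -/
def sternBrocotWalk : (n : ℕ) → (a b c d : ℤ) → 0 < b → 0 ≤ d → b * c - a * d = 1 →
    fareyGraph.Walk (fareyVertex a b) (fareyVertex c d)
  | 0, _, _, _, _, hb, hd, h => (fareyGraph_adj_fareyVertex hb hd h).toWalk
  | n + 1, a, b, c, d, hb, hd, h =>
    (sternBrocotWalk n a b (a + c) (b + d) hb (by omega) (by linear_combination h)).append
      (sternBrocotWalk n (a + c) (b + d) c d (by omega) hd (by linear_combination h))

lemma sternBrocotWalk_succ (n : ℕ) (a b c d : ℤ) (hb : 0 < b) (hd : 0 ≤ d)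
    (h : b * c - a * d = 1) : sternBrocotWalk (n + 1) a b c d hb hd h =
      (sternBrocotWalk n a b (a + c) (b + d) hb (by omega) (by linear_combination h)).append
        (sternBrocotWalk n (a + c) (b + d) c d (by omega) hd (by linear_combination h)) :=
  rfl

lemma sternBrocotWalk_support (n : ℕ) (a b c d : ℤ) (hb : 0 < b) (hd : 0 ≤ d)
    (h : b * c - a * d = 1) : ∀ x ∈ (sternBrocotWalk n a b c d hb hd h).support,
      fareyPos x ∈ Set.Icc (fareyPos (fareyVertex a b)) (fareyPos (fareyVertex c d)) := by
  induction n generalizing a b c d with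
  | zero =>
    obtain ⟨hlo, hhi⟩ := fareyPos_mediant hb hd h
    simp only [sternBrocotWalk, Walk.support_cons, Walk.support_nil, List.mem_cons,
      List.not_mem_nil, or_false]
    rintro x (rfl | rfl)
    · exact ⟨le_rfl, (hlo.trans hhi).le⟩
    · exact ⟨(hlo.trans hhi).le, le_rfl⟩
  | succ n ih =>
    obtain ⟨hlo, hhi⟩ := fareyPos_mediant hb hd h
    simp only [sternBrocotWalk_succ, Walk.mem_support_append_iff]
    rintro x (hx | hx)
    · exact Set.Icc_subset_Icc le_rfl hhi.le (ih _ _ _ _ _ _ _ x hx)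
    · exact Set.Icc_subset_Icc hlo.le le_rfl (ih _ _ _ _ _ _ _ x hx)

lemma sternBrocotWalk_edges {n : ℕ} {hb : 0 < b} {hd : 0 ≤ d} {h : b * c - a * d = 1}
    {e : Sym2 (Option ℚ)} (he : e ∈ (sternBrocotWalk n a b c d hb hd h).edges) :
    ∀ x ∈ e, fareyPos x ∈ Set.Icc (fareyPos (fareyVertex a b)) (fareyPos (fareyVertex c d)) :=
  fun x hx => sternBrocotWalk_support n a b c d hb hd h x
    (Walk.mem_support_iff_exists_mem_edges.2 (.inr ⟨e, he, hx⟩))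

/-- The two halves of a deeper walk meet only in the mediant. -/
lemma sternBrocotWalk_edgeDisjW {m n : ℕ} (hmn : m < n) (a b c d : ℤ) (hb : 0 < b)
    (hd : 0 ≤ d) (h : b * c - a * d = 1) :
    EdgeDisjW (sternBrocotWalk m a b c d hb hd h) (sternBrocotWalk n a b c d hb hd h) := by
  obtain ⟨n, rfl⟩ := Nat.exists_eq_add_of_lt hmn
  clear hmn
  induction m generalizing n a b c d with
  | zero =>
    obtain ⟨hlo, hhi⟩ := fareyPos_mediant hb hd h
    intro e he hen
    simp only [sternBrocotWalk, Walk.edges_cons, Walk.edges_nil, List.mem_singleton] at he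
    subst he
    rw [Nat.zero_add, sternBrocotWalk_succ, Walk.edges_append, List.mem_append] at hen
    rcases hen with hen | hen
    · exact hhi.not_ge (sternBrocotWalk_edges hen _ (Sym2.mem_mk_right _ _)).2
    · exact hlo.not_ge (sternBrocotWalk_edges hen _ (Sym2.mem_mk_left _ _)).1
  | succ m ih =>
    intro e he hen
    rw [show m + 1 + n + 1 = (m + n + 1) + 1 by omega] at hen
    rw [sternBrocotWalk_succ, Walk.edges_append, List.mem_append] at he hen
    rcases he with he | he <;> rcases hen with hen | hen
    · exact ih _ _ _ _ _ _ _ n e he hen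
    · refine notMem_edgeSet_of_forall_eq fareyPos_injective
        (t := fareyPos (fareyVertex (a + c) (b + d))) (fun x hx => ?_)
        (Walk.edges_subset_edgeSet _ he)
      exact le_antisymm (sternBrocotWalk_edges he x hx).2 (sternBrocotWalk_edges hen x hx).1
    · refine notMem_edgeSet_of_forall_eq fareyPos_injective
        (t := fareyPos (fareyVertex (a + c) (b + d))) (fun x hx => ?_)
        (Walk.edges_subset_edgeSet _ he)
      exact le_antisymm (sternBrocotWalk_edges hen x hx).2 (sternBrocotWalk_edges he x hx).1
    · exact ih _ _ _ _ _ _ _ n e he hen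

lemma sternBrocotWalk_pairwise_edgeDisjW (a b c d : ℤ) (hb : 0 < b) (hd : 0 ≤ d)
    (h : b * c - a * d = 1) :
    Pairwise fun m n => EdgeDisjW (sternBrocotWalk m a b c d hb hd h)
      (sternBrocotWalk n a b c d hb hd h) := by
  intro m n hmn
  rcases hmn.lt_or_gt with hmn | hmn
  · exact sternBrocotWalk_edgeDisjW hmn a b c d hb hd h
  · exact (sternBrocotWalk_edgeDisjW hmn a b c d hb hd h).symm

end SternBrocot

def fareyNeg : fareyGraph ≃g fareyGraph where
  toEquiv := Equiv.optionCongr (Equiv.neg ℚ)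
  map_rel_iff' := by
    rintro (_ | q) (_ | r) <;>
      simp [fareyGraph, fareyAdj, Rat.neg_num, Rat.neg_den] <;> omega

lemma fareyNeg_fareyVertex_one (n : ℤ) : fareyNeg (fareyVertex n 1) = fareyVertex (-n) 1 := by
  simp [fareyNeg, fareyVertex]

lemma fareyGraph_exists_walks_avoiding {n z : ℤ} (hzn : z ≠ n) :
    ∃ W : ℕ → fareyGraph.Walk (fareyVertex n 1) none,
      (Pairwise fun i j => EdgeDisjW (W i) (W j)) ∧ ∀ i, fareyVertex z 1 ∉ (W i).support := by
  wlog hlt : z < n generalizing n z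
  · obtain ⟨W, hW, hz⟩ := this (n := -n) (z := -z) (by omega) (by omega)
    refine ⟨fun i => ((W i).map fareyNeg.toHom).copy
      (by simp [fareyNeg_fareyVertex_one]) (by simp [fareyNeg]),
      fun i j hij => ?_, fun i hzi => ?_⟩
    · intro e he he'
      simp only [Walk.edges_copy] at he he'
      exact (hW hij).map (f := fareyNeg.toHom) fareyNeg.injective e he he'
    · simp only [Walk.support_copy, Walk.support_map, List.mem_map] at hzi
      obtain ⟨x, hx, hxz⟩ := hzi
      rw [← neg_neg z, ← fareyNeg_fareyVertex_one] at hxz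
      exact hz i (fareyNeg.injective hxz ▸ hx)
  refine ⟨fun i => sternBrocotWalk i n 1 1 0 one_pos le_rfl (by ring),
    sternBrocotWalk_pairwise_edgeDisjW n 1 1 0 one_pos le_rfl (by ring), fun i hz => ?_⟩
  have := (sternBrocotWalk_support i n 1 1 0 one_pos le_rfl (by ring) _ hz).1
  rw [fareyPos_fareyVertex_one, fareyPos_fareyVertex_one, WithTop.coe_le_coe] at this
  exact hlt.not_ge (by exact_mod_cast this)

lemma not_locallyFiniteStraddling_fareyGraph {β : Type*} [LinearOrder β] {g : Option ℚ → β}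
    (hg : Injective g) : ¬ LocallyFiniteStraddling fareyGraph g := by
  have hf : Injective fun n : ℤ => g (fareyVertex n 1) := hg.comp fareyVertex_one_injective
  obtain ⟨l, -, m, -, r, -, hlm, hmr⟩ :=
    ({0, 1, 2} : Finset ℤ).exists_lt_lt_of_two_lt_card hf.injOn (by decide)
  have hm : fareyVertex m 1 ≠ none := by simp [fareyVertex]
  rcases lt_or_gt_of_ne (hg.ne hm) with h | h
  · obtain ⟨W, hW, hz⟩ := fareyGraph_exists_walks_avoiding (n := l) (z := m)
      (by rintro rfl; exact hlm.ne' rfl)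
    exact not_locallyFiniteStraddling_of_walks hg W hW hz hlm h
  · obtain ⟨W, hW, hz⟩ := fareyGraph_exists_walks_avoiding (n := r) (z := m)
      (by rintro rfl; exact hmr.ne rfl)
    exact not_locallyFiniteStraddling_of_walks hg (fun i => (W i).reverse)
      (fun i j hij => (hW hij).reverse) (by simpa using hz) h hmr

/-- neither `K^{ℵ₀}` nor the Farey graph is strongly immersed in
the halved Farey graph. -/
theorem not_immersed_in_halvedFarey :
    ¬ StronglyImmersed (⊤ : SimpleGraph ℕ) halvedFarey ∧
    ¬ StronglyImmersed fareyGraph halvedFarey := by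
  constructor
  · intro h
    obtain ⟨g, hg, hfin⟩ := h.exists_injective_locallyFiniteStraddling Subtype.val_injective
      halvedFarey_locallyFiniteStraddling
    exact not_locallyFiniteStraddling_top hg hfin
  · intro h
    obtain ⟨g, hg, hfin⟩ := h.exists_injective_locallyFiniteStraddling Subtype.val_injective
      halvedFarey_locallyFiniteStraddling
    exact not_locallyFiniteStraddling_fareyGraph hg hfin
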